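/- Consider the modification of Algorithm 1 in which an output that is a heavy directed edge (v,w) is additionally accepted only with probability d(v)/(2·d_ℓ(v)) (and Fail is output otherwise); this acceptance probability is well defined and at most 3/4 since d_ℓ(v) ≥ (2/3)·d(v) for every heavy v when θ = ⌈√(6m)⌉. Then every directed edge of G, light or heavy, is output with probability exactly 1/(3nθ). -/

import Mathlib

/-!
Algorithm 1 outputs a light directed edge `(u, v)` only through the draws of `u`, of the index `j`
of `v` among the neighbours of `u`, and `B = 1`: probability `1/(3nθ)`. It outputs a heavy edge
`(v, w)` through any light neighbour `u` of `v`, the index of `v`, `B = 0` and `w`: total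
probability `(2/3) · d_ℓ(v) / (nθ d(v))`, and the acceptance probability `d(v)/(2 d_ℓ(v))` cancels
the excess exactly. It is at most `3/4` because the heavy vertices have degrees above `θ` summing to
at most `2m ≤ θ²/3`, so there are fewer than `θ/3 < d(v)/3` of them, and `d_ℓ(v) > (2/3) d(v)`.
-/

open scoped ENNReal

/-- **Algorithm 1** of Eden–Rosenbaum / Tětek–Thorup, as a probability mass function on
`Option (V × V)`: draw `u` uniformly from `V`, draw `j` uniformly from `{0, …, θ−1}`,
and draw `B ∈ {0,1}` with `P(B = 1) = 1/3`, independently; if `d(u) > θ` or `j ≥ d(u)`,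
output `none` (Fail); otherwise set `v = nbr u j`; if `B = 1`, output the directed edge
`(u, v)`; if `B = 0` and `v` is heavy (`d(v) > θ`), draw `w` uniformly from the neighbors
of `v` and output `(v, w)`; in all other cases output `none`. -/
noncomputable def alg1 {V : Type*} [Fintype V] [DecidableEq V] [Nonempty V]
    (G : SimpleGraph V) [DecidableRel G.Adj] (θ : ℕ) (hθ : 0 < θ)
    (nbr : V → ℕ → V) : PMF (Option (V × V)) :=
  (PMF.uniformOfFintype V).bind fun u =>
    (PMF.uniformOfFinset (Finset.range θ) (Finset.nonempty_range_iff.mpr hθ.ne')).bind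
      fun j =>
        (PMF.bernoulli (1 / 3) (by rw [← NNReal.coe_le_coe]; norm_num)).bind fun B =>
          if θ < G.degree u ∨ G.degree u ≤ j then PMF.pure none
          else
            if B then PMF.pure (some (u, nbr u j))
            else
              if h : θ < G.degree (nbr u j) then
                (PMF.uniformOfFinset (G.neighborFinset (nbr u j))
                  (Finset.card_pos.mp (Nat.lt_of_le_of_lt (Nat.zero_le θ) h))).bind
                  fun w => PMF.pure (some (nbr u j, w))
              else PMF.pure none

/-- A Bernoulli coin with parameter `p`; when `p ≤ 1` this is exactly `PMF.bernoulli p`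
(the value for `p > 1` is irrelevant: in our use the parameter is at most `3/4`). -/
noncomputable def bern' (p : ℝ≥0∞) : PMF Bool :=
  if h : p ≤ 1 then PMF.bernoulli p.toNNReal
    (by simpa using ENNReal.toNNReal_mono ENNReal.one_ne_top h) else PMF.pure true

/-- **Algorithm 1 with rejection for heavy edges**: run Algorithm 1; if the output is a
heavy directed edge `(v, w)` (i.e., `d(v) > θ`), additionally accept it only with
probability `d(v)/(2·d_ℓ(v))`, outputting `none` (Fail) otherwise. -/
noncomputable def alg1Rejected {V : Type*} [Fintype V] [DecidableEq V] [Nonempty V]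
    (G : SimpleGraph V) [DecidableRel G.Adj] (θ : ℕ) (hθ : 0 < θ)
    (nbr : V → ℕ → V) : PMF (Option (V × V)) :=
  (alg1 G θ hθ nbr).bind fun o =>
    match o with
    | none => PMF.pure none
    | some (v, w) =>
        if θ < G.degree v then
          (bern' ((G.degree v : ℝ≥0∞)
              / (2 * (((G.neighborFinset v).filter fun x => G.degree x ≤ θ).card : ℝ≥0∞)))).bind
            fun b => if b then PMF.pure (some (v, w)) else PMF.pure none
        else PMF.pure (some (v, w))

namespace PMF

open Finset

lemma uniformOfFinset_bind_apply {α β : Type*} (s : Finset α) (hs : s.Nonempty) (f : α → PMF β)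
    (b : β) : (uniformOfFinset s hs).bind f b = (#s : ℝ≥0∞)⁻¹ * ∑ a ∈ s, f a b := by
  rw [bind_apply, tsum_eq_sum (s := s) fun a ha => by simp [ha], mul_sum]
  exact sum_congr rfl fun a ha => by rw [uniformOfFinset_apply, if_pos ha]

lemma uniformOfFintype_bind_apply {α β : Type*} [Fintype α] [Nonempty α] (f : α → PMF β)
    (b : β) : (uniformOfFintype α).bind f b = (Fintype.card α : ℝ≥0∞)⁻¹ * ∑ a, f a b := by
  simp only [bind_apply, tsum_fintype, uniformOfFintype_apply, mul_sum]

end PMF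

lemma le_ceil_sqrt_mul_ceil_sqrt (n : ℕ) : n ≤ ⌈√(n : ℝ)⌉₊ * ⌈√(n : ℝ)⌉₊ := by
  have := (Real.sqrt_le_left (Nat.cast_nonneg _)).1 (Nat.le_ceil √(n : ℝ))
  rw [sq] at this
  exact_mod_cast this

lemma bern'_apply_true {p : ℝ≥0∞} (hp : p ≤ 1) : bern' p true = p := by
  rw [bern', dif_pos hp]
  have hp' : p.toNNReal ≤ 1 := by simpa using ENNReal.toNNReal_mono ENNReal.one_ne_top hp
  exact (PMF.bernoulli_apply hp' true).trans
    (ENNReal.coe_toNNReal (ne_top_of_le_ne_top ENNReal.one_ne_top hp))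

namespace SimpleGraph

open Finset

variable {V : Type*} [Fintype V] (G : SimpleGraph V) [DecidableRel G.Adj]

lemma sum_range_ite_eq_sum_neighborFinset {M : Type*} [AddCommMonoid M] {θ : ℕ} {u : V}
    {f : ℕ → V} (hf : Set.BijOn f (Set.Iio (G.degree u)) (G.neighborSet u)) (hu : G.degree u ≤ θ)
    (g : V → M) :
    ∑ j ∈ range θ, (if G.degree u ≤ j then 0 else g (f j)) = ∑ v ∈ G.neighborFinset u, g v := by
  rw [← sum_subset (range_subset_range.2 hu) fun j _ hj => if_pos (by simpa using hj)]
  calc ∑ j ∈ range (G.degree u), (if G.degree u ≤ j then 0 else g (f j))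
      = ∑ j ∈ range (G.degree u), g (f j) :=
        sum_congr rfl fun j hj => if_neg (by simpa using hj)
    _ = ∑ v ∈ G.neighborFinset u, g v :=
        sum_nbij f (fun j hj => by simpa using hf.mapsTo (by simpa using hj))
          (by simpa using hf.injOn) (by simpa using hf.surjOn) fun _ _ => rfl

lemma card_filter_lt_degree_mul_le (θ : ℕ) :
    #{x | θ < G.degree x} * (θ + 1) ≤ 2 * #G.edgeFinset := by
  rw [← sum_degrees_eq_twice_card_edges]
  calc #{x | θ < G.degree x} * (θ + 1) ≤ ∑ x with θ < G.degree x, G.degree x := by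
        rw [← smul_eq_mul]
        exact card_nsmul_le_sum {x | θ < G.degree x} _ _ fun x hx => (mem_filter.1 hx).2
    _ ≤ ∑ x, G.degree x := sum_le_sum_of_subset (subset_univ _)

/-- The paper's `d_ℓ(v)`. -/
def lightDegree (θ : ℕ) (v : V) : ℕ := #{x ∈ G.neighborFinset v | G.degree x ≤ θ}

noncomputable def acceptProb (θ : ℕ) (v : V) : ℝ≥0∞ := G.degree v / (2 * G.lightDegree θ v)

-- Fewer than `θ/3` vertices are heavy, so fewer than `d(v)/3` neighbours of `v` are.
lemma two_mul_degree_lt_three_mul_lightDegree {θ : ℕ} (hθ : 6 * #G.edgeFinset ≤ θ * θ) {v : V}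
    (hv : θ < G.degree v) : 2 * G.degree v < 3 * G.lightDegree θ v := by
  have hheavy := G.card_filter_lt_degree_mul_le θ
  have hv_heavy : 0 < #{x | θ < G.degree x} := card_pos.2 ⟨v, by simpa using hv⟩
  have hnbrs : #{x ∈ G.neighborFinset v | ¬G.degree x ≤ θ} ≤ #{x | θ < G.degree x} :=
    card_le_card fun x hx => by simp_all
  have hsplit := card_filter_add_card_filter_not (s := G.neighborFinset v) (G.degree · ≤ θ)
  rw [card_neighborFinset_eq_degree] at hsplit
  unfold lightDegree
  nlinarith

lemma acceptProb_le_three_div_four {θ : ℕ} (hθ : 6 * #G.edgeFinset ≤ θ * θ) {v : V}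
    (hv : θ < G.degree v) : G.acceptProb θ v ≤ 3 / 4 := by
  have h := G.two_mul_degree_lt_three_mul_lightDegree hθ hv
  have hL : (G.lightDegree θ v : ℝ≥0∞) ≠ 0 := by exact_mod_cast (by omega : G.lightDegree θ v ≠ 0)
  have hcast : 4 * (G.degree v : ℝ≥0∞) ≤ 6 * G.lightDegree θ v := by
    exact_mod_cast (by omega : 4 * G.degree v ≤ 6 * G.lightDegree θ v)
  rw [acceptProb, ENNReal.div_le_iff (by simpa using hL) (by finiteness)]
  calc (G.degree v : ℝ≥0∞) = 4⁻¹ * (4 * G.degree v) := by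
        rw [← mul_assoc, ENNReal.inv_mul_cancel (by norm_num) (by norm_num), one_mul]
    _ ≤ 4⁻¹ * (6 * G.lightDegree θ v) := by gcongr
    _ = 3 / 4 * (2 * G.lightDegree θ v) := by rw [div_eq_mul_inv]; ring

lemma lightDegree_div_degree_mul_acceptProb {θ : ℕ} {v : V} (hL : G.lightDegree θ v ≠ 0)
    (hd : G.degree v ≠ 0) :
    (G.lightDegree θ v : ℝ≥0∞) / G.degree v * G.acceptProb θ v = 2⁻¹ := by
  have hL' : (G.lightDegree θ v : ℝ≥0∞) ≠ 0 := by exact_mod_cast hL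
  have hd' : (G.degree v : ℝ≥0∞) ≠ 0 := by exact_mod_cast hd
  rw [acceptProb, div_eq_mul_inv, div_eq_mul_inv, ENNReal.mul_inv (by simp) (by simp),
    show ∀ x y z w : ℝ≥0∞, x * y * (z * (2⁻¹ * w)) = 2⁻¹ * (x * w) * (z * y) by intros; ring,
    ENNReal.mul_inv_cancel hL' (by simp), ENNReal.mul_inv_cancel hd' (by simp), mul_one, mul_one]

end SimpleGraph

section Algorithm

open Finset

variable {V : Type*} [Fintype V] [DecidableEq V] (G : SimpleGraph V) [DecidableRel G.Adj] (θ : ℕ)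

/-- The rest of Algorithm 1 once `u` and `v = nbr u j` have been drawn. -/
noncomputable def alg1Branch (u v : V) : PMF (Option (V × V)) :=
  (PMF.bernoulli (1 / 3) (by rw [← NNReal.coe_le_coe]; norm_num)).bind fun B =>
    if B then PMF.pure (some (u, v))
    else
      if h : θ < G.degree v then
        (PMF.uniformOfFinset (G.neighborFinset v)
          (Finset.card_pos.mp (Nat.lt_of_le_of_lt (Nat.zero_le θ) h))).bind
          fun w => PMF.pure (some (v, w))
      else PMF.pure none

lemma alg1_apply_some [Nonempty V] (hθ : 0 < θ) {nbr : V → ℕ → V}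
    (hnbr : ∀ u : V, Set.BijOn (nbr u) (Set.Iio (G.degree u)) (G.neighborSet u)) (e : V × V) :
    alg1 G θ hθ nbr (some e) = (Fintype.card V : ℝ≥0∞)⁻¹ * (θ : ℝ≥0∞)⁻¹ *
      ∑ u with G.degree u ≤ θ, ∑ v ∈ G.neighborFinset u, alg1Branch G θ u v (some e) := by
  rw [alg1, PMF.uniformOfFintype_bind_apply, mul_assoc, sum_filter, mul_sum _ _ (θ : ℝ≥0∞)⁻¹]
  refine congrArg _ (sum_congr rfl fun u _ => ?_)
  rw [PMF.uniformOfFinset_bind_apply, card_range]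
  by_cases hu : G.degree u ≤ θ
  · rw [if_pos hu,
      ← G.sum_range_ite_eq_sum_neighborFinset (hnbr u) hu (alg1Branch G θ u · (some e))]
    refine congrArg _ (sum_congr rfl fun j _ => ?_)
    by_cases hj : G.degree u ≤ j
    · simp [hj]
    · simp only [hj, not_lt.2 hu, or_self, if_false]
      rfl
  · simp [hu, not_le.1 hu]

lemma alg1Branch_apply {a b : V} (hab : G.Adj a b) (u v : V) :
    alg1Branch G θ u v (some (a, b)) = 3⁻¹ * (if u = a ∧ v = b then 1 else 0) +
      2 / 3 * (if v = a ∧ θ < G.degree a then (G.degree a : ℝ≥0∞)⁻¹ else 0) := by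
  have htrue : ((1 / 3 : NNReal) : ℝ≥0∞) = 3⁻¹ := by simp
  have hfalse : ((1 - 1 / 3 : NNReal) : ℝ≥0∞) = 2 / 3 := by
    have : (1 - 1 / 3 : NNReal) = 2 / 3 := by
      rw [← NNReal.coe_inj, NNReal.coe_sub (by rw [div_le_one (by norm_num)]; norm_num)]
      norm_num
    rw [this, ENNReal.coe_div (by norm_num)]
    rfl
  rw [alg1Branch, PMF.bind_apply, tsum_bool, PMF.bernoulli_apply, PMF.bernoulli_apply, cond_true,
    cond_false, htrue, hfalse, add_comm]
  simp only [if_true, Bool.false_eq_true, if_false]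
  congr 2
  · simp [PMF.pure_apply, eq_comm]
  · by_cases hv : θ < G.degree v
    · rw [dif_pos hv, PMF.uniformOfFinset_bind_apply, G.card_neighborFinset_eq_degree]
      by_cases hva : v = a
      · subst hva
        simp [hv, hab]
      · simp [hva, Ne.symm hva]
    · rw [dif_neg hv, PMF.pure_apply, if_neg (Option.some_ne_none _)]
      exact (if_neg fun h : v = a ∧ θ < G.degree a => hv (h.1 ▸ h.2)).symm

lemma alg1_apply_of_adj [Nonempty V] (hθ : 0 < θ) {nbr : V → ℕ → V}
    (hnbr : ∀ u : V, Set.BijOn (nbr u) (Set.Iio (G.degree u)) (G.neighborSet u))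
    {a b : V} (hab : G.Adj a b) :
    alg1 G θ hθ nbr (some (a, b)) = (Fintype.card V : ℝ≥0∞)⁻¹ * (θ : ℝ≥0∞)⁻¹ *
      if G.degree a ≤ θ then 3⁻¹
      else 2 / 3 * ((G.lightDegree θ a : ℝ≥0∞) / G.degree a) := by
  rw [alg1_apply_some G θ hθ hnbr]
  congr 1
  simp_rw [alg1Branch_apply G θ hab, sum_add_distrib, ← mul_sum]
  have hout : ∀ u, ∑ v ∈ G.neighborFinset u, (if u = a ∧ v = b then (1 : ℝ≥0∞) else 0) =
      if u = a then 1 else 0 := fun u => by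
    by_cases hu : u = a
    · simp [hu, hab]
    · simp [hu]
  simp_rw [hout]
  split_ifs with ha
  · simp [not_lt.2 ha, ha]
  · have hfilter : ({u ∈ {u | G.degree u ≤ θ} | G.Adj u a} : Finset V) =
        {x ∈ G.neighborFinset a | G.degree x ≤ θ} := by
      ext x
      simp [G.adj_comm, and_comm]
    simp only [not_le.1 ha, and_true, sum_ite_eq', SimpleGraph.mem_neighborFinset, mem_filter,
      mem_univ, true_and, ha, if_false, mul_zero, zero_add]
    rw [← sum_filter, hfilter, sum_const, nsmul_eq_mul, SimpleGraph.lightDegree,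
      div_eq_mul_inv _ (G.degree a : ℝ≥0∞)]

lemma alg1Rejected_apply_some [Nonempty V] (hθ : 0 < θ) (nbr : V → ℕ → V) {v w : V}
    (hacc : θ < G.degree v → G.acceptProb θ v ≤ 1) :
    alg1Rejected G θ hθ nbr (some (v, w)) =
      alg1 G θ hθ nbr (some (v, w)) * if θ < G.degree v then G.acceptProb θ v else 1 := by
  unfold SimpleGraph.acceptProb SimpleGraph.lightDegree at *
  rw [alg1Rejected, PMF.bind_apply, tsum_eq_single (some (v, w))]
  · refine congrArg _ ?_
    dsimp only
    split_ifs with hv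
    · simp [PMF.bind_apply, bern'_apply_true (hacc hv)]
    · simp
  · rintro (_ | ⟨v', w'⟩) hne
    · simp
    · have hne' : (some (v, w) : Option (V × V)) ≠ some (v', w') := Ne.symm hne
      dsimp only
      split_ifs <;> simp [PMF.bind_apply, hne']

lemma alg1Rejected_apply_of_adj [Nonempty V] (hθ6 : 6 * #G.edgeFinset ≤ θ * θ) (hθ : 0 < θ)
    {nbr : V → ℕ → V}
    (hnbr : ∀ u : V, Set.BijOn (nbr u) (Set.Iio (G.degree u)) (G.neighborSet u))
    {a b : V} (hab : G.Adj a b) :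
    alg1Rejected G θ hθ nbr (some (a, b)) = (Fintype.card V : ℝ≥0∞)⁻¹ * (θ : ℝ≥0∞)⁻¹ * 3⁻¹ := by
  have hacc : θ < G.degree a → G.acceptProb θ a ≤ 1 := fun hv =>
    (G.acceptProb_le_three_div_four hθ6 hv).trans (ENNReal.div_le_of_le_mul (by norm_num))
  rw [alg1Rejected_apply_some G θ hθ nbr hacc, alg1_apply_of_adj G θ hθ hnbr hab]
  by_cases ha : G.degree a ≤ θ
  · rw [if_pos ha, if_neg (not_lt.2 ha), mul_one]
  · have hheavy := not_le.1 ha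
    have hL : G.lightDegree θ a ≠ 0 := by
      have := G.two_mul_degree_lt_three_mul_lightDegree hθ6 hheavy
      omega
    rw [if_neg ha, if_pos hheavy, mul_assoc, mul_assoc (2 / 3 : ℝ≥0∞),
      G.lightDegree_div_degree_mul_acceptProb hL (by omega), div_eq_mul_inv, mul_right_comm 2,
      ENNReal.mul_inv_cancel two_ne_zero ENNReal.ofNat_ne_top, one_mul]

end Algorithm

/-- With `θ = ⌈√(6m)⌉`, the acceptance probability `d(v)/(2·d_ℓ(v))` is
well defined and at most `3/4` for every heavy vertex `v` (since `d_ℓ(v) ≥ (2/3)·d(v)`),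
and the modified algorithm outputs every directed edge of `G`, light or heavy, with
probability exactly `1/(3nθ)`. -/
theorem alg1Rejected_uniform {V : Type*} [Fintype V] [DecidableEq V] [Nonempty V]
    (G : SimpleGraph V) [DecidableRel G.Adj]
    (hm : 1 ≤ G.edgeFinset.card)
    (θ : ℕ) (hθ : θ = ⌈Real.sqrt (6 * (G.edgeFinset.card : ℝ))⌉₊)
    (nbr : V → ℕ → V)
    (hnbr : ∀ u : V, Set.BijOn (nbr u) (Set.Iio (G.degree u)) (G.neighborSet u)) :
    (∀ v : V, θ < G.degree v →
        (G.degree v : ℝ≥0∞)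
            / (2 * (((G.neighborFinset v).filter fun x => G.degree x ≤ θ).card : ℝ≥0∞))
          ≤ 3 / 4) ∧
    (∀ a b : V, G.Adj a b →
        alg1Rejected G θ
          (by subst hθ
              refine Nat.ceil_pos.mpr (Real.sqrt_pos.mpr ?_)
              exact_mod_cast Nat.mul_pos (by norm_num) hm)
          nbr (some (a, b))
          = 1 / (3 * (Fintype.card V : ℝ≥0∞) * (θ : ℝ≥0∞))) := by
  have hθ6 : 6 * G.edgeFinset.card ≤ θ * θ := by
    have := le_ceil_sqrt_mul_ceil_sqrt (6 * G.edgeFinset.card)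
    push_cast at this
    rwa [← hθ] at this
  refine ⟨fun v hv => G.acceptProb_le_three_div_four hθ6 hv, fun a b hab => ?_⟩
  rw [alg1Rejected_apply_of_adj G θ hθ6 _ hnbr hab, one_div,
    ENNReal.mul_inv (by simp) (Or.inl (by finiteness)), ENNReal.mul_inv (by simp) (by simp)]
  ring
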